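/- Let η ∈ (0,1/4). There exist positive constants δ_0, C_1, C_2 (depending only on η) such that for every δ with |δ| < δ_0, denoting by a(δ) the unique zero of f_δ := f + δ in (1/4, 3/4) and μ(δ) := f'(a(δ)), and letting Y be the solution of Y_τ = f(Y) + δ with Y(0,ξ) = ξ, the following holds: if ξ ∈ (a(δ), 1-η) and τ > 0 are such that Y(s,ξ) ∈ (a(δ), 1-η) for all s ∈ [0,τ], then C_1 e^{μ(δ)τ}(ξ - a(δ)) ≤ Y(τ,ξ) - a(δ) ≤ C_2 e^{μ(δ)τ}(ξ - a(δ)); and if ξ ∈ (η, a(δ)) with Y(s,ξ) ∈ (η, a(δ)) for all s ∈ [0,τ], then C_2 e^{μ(δ)τ}(ξ - a(δ)) ≤ Y(τ,ξ) - a(δ) ≤ C_1 e^{μ(δ)τ}(ξ - a(δ)). -/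

import Mathlib

noncomputable def f (u : ℝ) : ℝ := u * (1 - u) * (u - 1/2)

noncomputable def qpoly (a u : ℝ) : ℝ := -(u^2 + a*u + a^2) + (3/2)*(u+a) - 1/2

lemma f_sub (a u : ℝ) : f u - f a = (u - a) * qpoly a u := by
  unfold f qpoly; ring

lemma qpoly_sub_mu (a u : ℝ) :
    qpoly a u - (-3*a^2 + 3*a - 1/2) = (u - a) * (3/2 - u - 2*a) := by
  unfold qpoly; ring

lemma deriv_f_eq (u : ℝ) : deriv f u = -3*u^2 + 3*u - 1/2 := by
  have h : HasDerivAt f (-3*u^2 + 3*u - 1/2) u := by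
    have h1 := (((hasDerivAt_id u).mul ((hasDerivAt_const u (1:ℝ)).sub (hasDerivAt_id u))).mul
      ((hasDerivAt_id u).sub_const (1/2 : ℝ)))
    simp only [id_eq] at h1
    exact h1.congr_deriv (by simp only [Pi.sub_apply, Pi.mul_apply, id_eq]; ring)
  exact h.deriv

lemma mono_aux {g : ℝ → ℝ} {τ : ℝ} (hτ : 0 < τ)
    (hcont : ContinuousOn g (Set.Icc 0 τ))
    (hder : ∀ s ∈ Set.Ioo (0:ℝ) τ, ∃ d, 0 ≤ d ∧ HasDerivAt g d s) : g 0 ≤ g τ := by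
  have hmono : MonotoneOn g (Set.Icc 0 τ) := by
    apply monotoneOn_of_deriv_nonneg (convex_Icc 0 τ) hcont
    · intro x hx
      rw [interior_Icc] at hx
      obtain ⟨d, _, hd⟩ := hder x hx
      exact hd.differentiableAt.differentiableWithinAt
    · intro x hx
      rw [interior_Icc] at hx
      obtain ⟨d, h0, hd⟩ := hder x hx
      rw [hd.deriv]; exact h0
  exact hmono ⟨le_rfl, hτ.le⟩ ⟨hτ.le, le_rfl⟩ hτ.le

lemma a_near_half {a δ η : ℝ} (ha1 : 1/4 < a) (ha2 : a < 3/4)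
    (heq : a*(1-a)*(a-1/2) + δ = 0) (hδ : |δ| < 3/32*(η*(1-η)))
    (hq : 0 < η*(1-η)) : |a - 1/2| ≤ η*(1-η)/2 := by
  obtain ⟨h1, h2⟩ := abs_lt.mp hδ
  have hkey : 3/16 ≤ a*(1-a) := by
    nlinarith [mul_nonneg (by linarith : (0:ℝ) ≤ a - 1/4) (by linarith : (0:ℝ) ≤ 3/4 - a)]
  rw [abs_le]
  constructor
  · rcases le_or_gt (1/2) a with h | h
    · linarith
    · nlinarith [mul_nonneg (by linarith : (0:ℝ) ≤ 1/2 - a) (by linarith : (0:ℝ) ≤ a*(1-a) - 3/16)]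
  · rcases le_or_gt a (1/2) with h | h
    · linarith
    · nlinarith [mul_nonneg (by linarith : (0:ℝ) ≤ a - 1/2) (by linarith : (0:ℝ) ≤ a*(1-a) - 3/16)]

lemma q_lower {η a u : ℝ} (hηp : 0 < η) (hη4 : η < 1/4) (ha1 : 1/4 < a) (ha2 : a < 3/4)
    (hA : |a - 1/2| ≤ η*(1-η)/2) (hu1 : η ≤ u) (hu2 : u ≤ 1 - η) :
    η*(1-η)/2 ≤ qpoly a u := by
  obtain ⟨h1, h2⟩ := abs_le.mp hA
  have hid : qpoly a u = u*(1-u) + (a-1/2)*(1-u-a) := by unfold qpoly; ring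
  rw [hid]
  nlinarith [mul_nonneg (by linarith : (0:ℝ) ≤ u - η) (by linarith : (0:ℝ) ≤ 1 - η - u),
    mul_nonneg (by linarith : (0:ℝ) ≤ η*(1-η)/2 - (a-1/2)) (by linarith : (0:ℝ) ≤ 1 - (1-u-a)),
    mul_nonneg (by linarith : (0:ℝ) ≤ η*(1-η)/2 + (a-1/2)) (by linarith : (0:ℝ) ≤ 1 + (1-u-a))]

lemma core {v h : ℝ → ℝ} {τ μ c B : ℝ} (hτ : 0 < τ) (hc : 0 < c)
    (hvcont : ContinuousOn v (Set.Icc 0 τ))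
    (hpos : ∀ s ∈ Set.Icc (0:ℝ) τ, 0 < v s)
    (hder : ∀ s ∈ Set.Ioo (0:ℝ) τ, HasDerivAt v (v s * h s) s)
    (hhc : ∀ s ∈ Set.Ioo (0:ℝ) τ, c ≤ h s)
    (hhμ : ∀ s ∈ Set.Ioo (0:ℝ) τ, |h s - μ| ≤ v s)
    (hvB : ∀ s ∈ Set.Icc (0:ℝ) τ, v s ≤ B) :
    Real.exp (-(B/c)) * Real.exp (μ*τ) * v 0 ≤ v τ ∧
      v τ ≤ Real.exp (B/c) * Real.exp (μ*τ) * v 0 := by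
  have h0m : (0:ℝ) ∈ Set.Icc (0:ℝ) τ := ⟨le_rfl, hτ.le⟩
  have hτm : τ ∈ Set.Icc (0:ℝ) τ := ⟨hτ.le, le_rfl⟩
  have hv0 := hpos 0 h0m
  have hvτ := hpos τ hτm
  have hlogc : ContinuousOn (fun s => Real.log (v s)) (Set.Icc 0 τ) :=
    hvcont.log (fun s hs => (hpos s hs).ne')
  have hlin : ContinuousOn (fun s : ℝ => μ * s) (Set.Icc 0 τ) :=
    (continuous_const.mul continuous_id).continuousOn
  have hderiv : ∀ s ∈ Set.Ioo (0:ℝ) τ,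
      HasDerivAt (fun t => Real.log (v t) - μ * t) (h s - μ) s := by
    intro s hs
    have hvs := hpos s (Set.Ioo_subset_Icc_self hs)
    have d1 : HasDerivAt (fun t => Real.log (v t)) (v s * h s / v s) s := (hder s hs).log hvs.ne'
    rw [mul_div_cancel_left₀ _ hvs.ne'] at d1
    have := d1.sub ((hasDerivAt_id s).const_mul μ)
    simp only [mul_one] at this
    exact this
  have hb : (1/c) * v τ - (1/c) * v 0 ≤ B/c := by
    have hB' : v τ - v 0 ≤ B := by linarith [hvB τ hτm]
    calc (1/c) * v τ - (1/c) * v 0 = (1/c) * (v τ - v 0) := by ring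
      _ ≤ (1/c) * B := mul_le_mul_of_nonneg_left hB' (by positivity)
      _ = B/c := one_div_mul_eq_div c B
  have hb' : (1/c) * v 0 - (1/c) * v τ ≤ B/c := by
    have hB' : v 0 - v τ ≤ B := by linarith [hvB 0 h0m]
    calc (1/c) * v 0 - (1/c) * v τ = (1/c) * (v 0 - v τ) := by ring
      _ ≤ (1/c) * B := mul_le_mul_of_nonneg_left hB' (by positivity)
      _ = B/c := one_div_mul_eq_div c B
  constructor
  · have key := mono_aux hτ
      (g := fun s => Real.log (v s) - μ*s + (1/c) * v s)
      ((hlogc.sub hlin).add (continuousOn_const.mul hvcont))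
      (by
        intro s hs
        refine ⟨h s - μ + (1/c)*(v s * h s), ?_, (hderiv s hs).add ((hder s hs).const_mul (1/c))⟩
        have hvs := hpos s (Set.Ioo_subset_Icc_self hs)
        have h1 := (abs_le.mp (hhμ s hs)).1
        have h2 : v s ≤ (1/c)*(v s * h s) := by
          rw [one_div_mul_eq_div, le_div_iff₀ hc]
          exact mul_le_mul_of_nonneg_left (hhc s hs) hvs.le
        linarith)
    have hlog : μ*τ + Real.log (v 0) - B/c ≤ Real.log (v τ) := by linarith
    calc Real.exp (-(B/c)) * Real.exp (μ*τ) * v 0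
        = Real.exp (-(B/c) + μ*τ + Real.log (v 0)) := by
          rw [Real.exp_add, Real.exp_add, Real.exp_log hv0]
      _ ≤ Real.exp (Real.log (v τ)) := Real.exp_le_exp.mpr (by linarith)
      _ = v τ := Real.exp_log hvτ
  · have key := mono_aux hτ
      (g := fun s => μ*s + (1/c) * v s - Real.log (v s))
      ((hlin.add (continuousOn_const.mul hvcont)).sub hlogc)
      (by
        intro s hs
        have d2 : HasDerivAt (fun t => μ * t) μ s := by
          simpa using (hasDerivAt_id s).const_mul μ
        refine ⟨μ + (1/c)*(v s * h s) - (h s - μ) - μ, ?_, ?_⟩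
        · have hvs := hpos s (Set.Ioo_subset_Icc_self hs)
          have h1 := (abs_le.mp (hhμ s hs)).2
          have h2 : v s ≤ (1/c)*(v s * h s) := by
            rw [one_div_mul_eq_div, le_div_iff₀ hc]
            exact mul_le_mul_of_nonneg_left (hhc s hs) hvs.le
          linarith
        · have hvs := hpos s (Set.Ioo_subset_Icc_self hs)
          have dlog : HasDerivAt (fun t => Real.log (v t)) (h s) s := by
            have d1 : HasDerivAt (fun t => Real.log (v t)) (v s * h s / v s) s :=
              (hder s hs).log hvs.ne'
            rwa [mul_div_cancel_left₀ _ hvs.ne'] at d1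
          have := (d2.add ((hder s hs).const_mul (1/c))).sub dlog
          exact this.congr_deriv (by ring))
    have hlog : Real.log (v τ) ≤ μ*τ + Real.log (v 0) + B/c := by linarith
    calc v τ = Real.exp (Real.log (v τ)) := (Real.exp_log hvτ).symm
      _ ≤ Real.exp (B/c + μ*τ + Real.log (v 0)) := Real.exp_le_exp.mpr (by linarith)
      _ = Real.exp (B/c) * Real.exp (μ*τ) * v 0 := by
          rw [Real.exp_add, Real.exp_add, Real.exp_log hv0]

theorem est_Y_middle (η : ℝ) (hη : η ∈ Set.Ioo (0:ℝ) (1/4)) :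
    ∃ δ0 > (0:ℝ), ∃ C1 > (0:ℝ), ∃ C2 > (0:ℝ),
      ∀ δ : ℝ, |δ| < δ0 →
      ∀ a : ℝ, a ∈ Set.Ioo (1/4 : ℝ) (3/4) → f a + δ = 0 →
      ∀ Y : ℝ → ℝ → ℝ,
        ContDiff ℝ (⊤ : ℕ∞) (fun p : ℝ × ℝ => Y p.1 p.2) →
        (∀ ξ : ℝ, ∀ τ : ℝ, 0 < τ → HasDerivAt (fun t => Y t ξ) (f (Y τ ξ) + δ) τ) →
        (∀ ξ : ℝ, Y 0 ξ = ξ) →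
        ∀ ξ τ : ℝ, 0 < τ →
          (ξ ∈ Set.Ioo a (1 - η) → (∀ s ∈ Set.Icc (0:ℝ) τ, Y s ξ ∈ Set.Ioo a (1 - η)) →
            C1 * Real.exp (deriv f a * τ) * (ξ - a) ≤ Y τ ξ - a ∧
            Y τ ξ - a ≤ C2 * Real.exp (deriv f a * τ) * (ξ - a)) ∧
          (ξ ∈ Set.Ioo η a → (∀ s ∈ Set.Icc (0:ℝ) τ, Y s ξ ∈ Set.Ioo η a) →
            C2 * Real.exp (deriv f a * τ) * (ξ - a) ≤ Y τ ξ - a ∧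
            Y τ ξ - a ≤ C1 * Real.exp (deriv f a * τ) * (ξ - a)) := by
  obtain ⟨hηp, hη4⟩ := hη
  have hq : 0 < η*(1-η) := by nlinarith
  have hc : 0 < η*(1-η)/2 := by linarith
  refine ⟨3/32*(η*(1-η)), by linarith,
    Real.exp (-((1:ℝ)/(η*(1-η)/2))), Real.exp_pos _,
    Real.exp ((1:ℝ)/(η*(1-η)/2)), Real.exp_pos _, ?_⟩
  intro δ hδ a ha hfa Y hYsmooth hode hinit ξ τ hτ
  obtain ⟨ha1, ha2⟩ := ha
  have hfa2 : a*(1-a)*(a-1/2) + δ = 0 := by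
    have := hfa; simp only [f] at this; exact this
  have hA := a_near_half ha1 ha2 hfa2 hδ hq
  obtain ⟨hAl, hAr⟩ := abs_le.mp hA
  have hfd : ∀ u, f u + δ = (u - a) * qpoly a u := by
    intro u
    linarith [f_sub a u, hfa]
  have hwc : Continuous (fun s => Y s ξ) := by
    have hcY := hYsmooth.continuous
    exact hcY.comp (continuous_id.prodMk continuous_const)
  have hμ := deriv_f_eq a
  constructor
  · -- case 1: ξ ∈ (a, 1-η)
    intro hξ hall
    have hcore := core (v := fun s => Y s ξ - a) (h := fun s => qpoly a (Y s ξ))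
      (μ := deriv f a) (c := η*(1-η)/2) (B := (1:ℝ)) hτ hc
      ((hwc.sub continuous_const).continuousOn)
      (fun s hs => sub_pos.mpr (hall s hs).1)
      (by
        intro s hs
        have hd := (hode ξ s hs.1).sub_const a
        rw [hfd (Y s ξ)] at hd
        exact hd)
      (by
        intro s hs
        obtain ⟨hu1, hu2⟩ := hall s (Set.Ioo_subset_Icc_self hs)
        exact q_lower hηp hη4 ha1 ha2 hA (by linarith) (le_of_lt hu2))
      (by
        intro s hs
        obtain ⟨hu1, hu2⟩ := hall s (Set.Ioo_subset_Icc_self hs)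
        show |qpoly a (Y s ξ) - deriv f a| ≤ Y s ξ - a
        rw [hμ, qpoly_sub_mu, abs_mul, abs_of_pos (sub_pos.mpr hu1)]
        exact mul_le_of_le_one_right (by linarith)
          (abs_le.mpr ⟨by linarith, by linarith⟩))
      (by
        intro s hs
        obtain ⟨hu1, hu2⟩ := hall s hs
        show Y s ξ - a ≤ 1
        linarith)
    obtain ⟨L, R⟩ := hcore
    simp only [hinit ξ] at L R
    exact ⟨L, R⟩
  · -- case 2: ξ ∈ (η, a)
    intro hξ hall
    have hcore := core (v := fun s => a - Y s ξ) (h := fun s => qpoly a (Y s ξ))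
      (μ := deriv f a) (c := η*(1-η)/2) (B := (1:ℝ)) hτ hc
      ((continuous_const.sub hwc).continuousOn)
      (fun s hs => sub_pos.mpr (hall s hs).2)
      (by
        intro s hs
        have hd := (hode ξ s hs.1).const_sub a
        rw [hfd (Y s ξ)] at hd
        have heq : -((Y s ξ - a) * qpoly a (Y s ξ)) = (a - Y s ξ) * qpoly a (Y s ξ) := by ring
        rw [heq] at hd
        exact hd)
      (by
        intro s hs
        obtain ⟨hu1, hu2⟩ := hall s (Set.Ioo_subset_Icc_self hs)
        exact q_lower hηp hη4 ha1 ha2 hA (le_of_lt hu1) (by linarith))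
      (by
        intro s hs
        obtain ⟨hu1, hu2⟩ := hall s (Set.Ioo_subset_Icc_self hs)
        show |qpoly a (Y s ξ) - deriv f a| ≤ a - Y s ξ
        rw [hμ, qpoly_sub_mu, abs_mul]
        have habs : |Y s ξ - a| = a - Y s ξ := by
          rw [abs_of_neg (by linarith : Y s ξ - a < 0)]; ring
        rw [habs]
        exact mul_le_of_le_one_right (by linarith)
          (abs_le.mpr ⟨by linarith, by linarith⟩))
      (by
        intro s hs
        obtain ⟨hu1, hu2⟩ := hall s hs
        show a - Y s ξ ≤ 1
        linarith)
    obtain ⟨L, R⟩ := hcore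
    simp only [hinit ξ] at L R
    exact ⟨by linarith, by linarith⟩
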